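/- arXiv:1709.10167 — 3 statements merged into one kernel-verified Lean document; each statement's English description precedes it below -/
import Mathlib

section
/- For coprime positive integers n and s with n,s ≥ 2, the number of positive integers that cannot be written as a·n + b·s with a, b nonnegative integers equals (n−1)(s−1)/2. -/
/-!
Let `S` be the additive monoid generated by `n` and `s`, and `F = n * s - n - s` its Frobenius
number (`frobeniusNumber_pair`), so every gap lies in `[0, F]`. The reflection `k ↦ F - k`
exchanges gaps and elements of `S` in `[0, F]`: `k` and `F - k` cannot both lie in `S`, since
`F ∉ S`; and if `k ∉ S`, choose `b < n` with `b * s ≡ k (mod n)`, then `b * s - k = c * n` with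
`c ≥ 1`, whence `F - k = (c - 1) * n + (n - 1 - b) * s ∈ S`. So exactly half of the
`F + 1 = (n - 1) * (s - 1)` numbers in `[0, F]` are gaps.
-/

open Finset

namespace Nat

theorem two_mul_ncard_setOf_not_of_reflect {m : ℕ} {P : ℕ → Prop} (hgt : ∀ k, m < k → P k)
    (hP : ∀ k ≤ m, P (m - k) ↔ ¬ P k) : 2 * {k | ¬ P k}.ncard = m + 1 := by
  classical
  have hset : {k | ¬ P k} = ↑{k ∈ range (m + 1) | ¬ P k} := by
    ext k
    simp only [Set.mem_ofPred_eq, coe_filter, mem_range]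
    exact ⟨fun hk => ⟨lt_succ_of_le (not_lt.mp (mt (hgt k) hk)), hk⟩, And.right⟩
  have hreflect : #{k ∈ range (m + 1) | ¬ P k} = #{k ∈ range (m + 1) | P k} := by
    refine card_nbij' (m - ·) (m - ·) ?_ ?_ ?_ ?_ <;> intro k hk <;>
      simp only [coe_filter, mem_range, Set.mem_ofPred_eq] at hk ⊢
    · exact ⟨by omega, (hP k (by omega)).mpr hk.2⟩
    · exact ⟨by omega, fun h => (hP k (by omega)).mp h hk.2⟩
    · omega
    · omega
  rw [hset, Set.ncard_coe_finset, two_mul]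
  nth_rewrite 2 [hreflect]
  rw [add_comm, card_filter_add_card_filter_not, card_range]

theorem mem_closure_pair_iff {n s k : ℕ} :
    k ∈ AddSubmonoid.closure ({n, s} : Set ℕ) ↔ ∃ a b : ℕ, k = a * n + b * s := by
  simp [AddSubmonoid.mem_closure_pair, eq_comm]

theorem sub_mem_closure_pair_of_notMem {n s k : ℕ} (h : Coprime n s) (hn : 1 < n) (hs : 1 < s)
    (hk : k ≤ n * s - n - s) (hkS : k ∉ AddSubmonoid.closure ({n, s} : Set ℕ)) :
    n * s - n - s - k ∈ AddSubmonoid.closure ({n, s} : Set ℕ) := by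
  rw [mem_closure_pair_iff] at hkS ⊢
  obtain ⟨b, hbn, hb⟩ := exists_mul_mod_eq_of_coprime k h.symm (by omega)
  have hbk : b * s ≡ k [MOD n] := by rw [mul_comm]; exact hb
  have hlt : k < b * s := by
    by_contra! hle
    obtain ⟨a, ha⟩ := (Nat.modEq_iff_dvd' hle).mp hbk
    exact hkS ⟨a, b, by rw [mul_comm a, ← ha, Nat.sub_add_cancel hle]⟩
  obtain ⟨c, hc⟩ := (Nat.modEq_iff_dvd' hlt.le).mp hbk.symm
  have hc0 : c ≠ 0 := by rintro rfl; omega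
  have hns := Nat.add_le_mul hn hs
  refine ⟨c - 1, n - 1 - b, ?_⟩
  simp only [Nat.sub_sub]
  zify [hlt.le, (by omega : n + s + k ≤ n * s), one_le_iff_ne_zero.mpr hc0,
    (by omega : 1 + b ≤ n)] at hc ⊢
  linear_combination hc

theorem sub_mem_closure_pair_iff {n s k : ℕ} (h : Coprime n s) (hn : 1 < n) (hs : 1 < s)
    (hk : k ≤ n * s - n - s) :
    n * s - n - s - k ∈ AddSubmonoid.closure ({n, s} : Set ℕ) ↔
      k ∉ AddSubmonoid.closure ({n, s} : Set ℕ) := by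
  refine ⟨fun hsub hkS => ?_, sub_mem_closure_pair_of_notMem h hn hs hk⟩
  have hF := add_mem hkS hsub
  rw [Nat.add_sub_cancel' hk] at hF
  exact (frobeniusNumber_iff.mp (frobeniusNumber_pair h hn hs)).1 hF

theorem mul_sub_sub_add_one {n s : ℕ} (hn : 1 < n) (hs : 1 < s) :
    n * s - n - s + 1 = (n - 1) * (s - 1) := by
  rw [Nat.sub_sub]
  zify [Nat.add_le_mul hn hs, hn.le, hs.le]
  ring

end Nat

/-- Genus formula: for coprime `n, s ≥ 2`, the number of positive integers not
representable as `a*n + b*s` with `a, b : ℕ` equals `(n-1)*(s-1)/2`. -/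
theorem gap_count (n s : ℕ) (hn : 2 ≤ n) (hs : 2 ≤ s) (h : Nat.Coprime n s) :
    {k : ℕ | 0 < k ∧ ¬ ∃ a b : ℕ, k = a * n + b * s}.ncard = (n - 1) * (s - 1) / 2 := by
  have hgaps : {k : ℕ | 0 < k ∧ ¬ ∃ a b : ℕ, k = a * n + b * s} =
      {k | k ∉ AddSubmonoid.closure ({n, s} : Set ℕ)} := by
    ext k
    rw [Set.mem_ofPred_eq, Set.mem_ofPred_eq, Nat.mem_closure_pair_iff, and_iff_right_iff_imp]
    exact fun hk => pos_of_ne_zero (by rintro rfl; exact hk ⟨0, 0, by ring⟩)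
  have hcount := Nat.two_mul_ncard_setOf_not_of_reflect
    (frobeniusNumber_iff.mp (frobeniusNumber_pair h hn hs)).2
    fun k hk => Nat.sub_mem_closure_pair_iff h hn hs hk
  rw [hgaps, ← Nat.mul_sub_sub_add_one hn hs, ← hcount]
  omega
end

section
/- Let n and s be coprime positive integers and let W = {w : w ∉ ⟨n,s⟩} be the set of positive integers not representable as nonnegative combinations of n and s. Then in the ring of formal power series ℚ[[t]], the identity ∑_{w∈W} t^w = 1/(1−t) − (1−t^{ns})/((1−t^n)(1−t^s)) holds. -/
open PowerSeries

/-!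
Coprimality makes every element of `⟨n,s⟩` uniquely of the form `a * n + b * s` with `a < s`, so
`⟨n,s⟩` is the disjoint union of the Apéry set `{a * n | a < s}` and `s + ⟨n,s⟩`. Its generating
series `G` therefore satisfies `G * (1 - X^s) = ∑_{a<s} X^(a*n)`, and multiplying by `1 - X^n`
telescopes to `1 - X^(n*s)`. The gaps form the complement of `⟨n,s⟩` in `ℕ`, whose generating
series is `1/(1-X) - G`.
-/

noncomputable def generatingSeries (R : Type*) [Semiring R] (T : Set ℕ) : R⟦X⟧ :=
  mk (T.indicator 1)

section generatingSeries

variable {R : Type*}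

@[simp]
theorem coeff_generatingSeries [Semiring R] (T : Set ℕ) (k : ℕ) :
    coeff k (generatingSeries R T) = T.indicator 1 k :=
  coeff_mk _ _

theorem generatingSeries_coe_finset [Semiring R] (T : Finset ℕ) :
    generatingSeries R T = ∑ k ∈ T, X ^ k := by
  ext k
  classical
  simp [map_sum, coeff_X_pow, Set.indicator_apply]

theorem generatingSeries_union [Semiring R] {T U : Set ℕ} (h : Disjoint T U) :
    generatingSeries R (T ∪ U) = generatingSeries R T + generatingSeries R U := by
  ext k
  simp [Set.indicator_union_of_disjoint h]

theorem X_pow_mul_generatingSeries [Semiring R] (T : Set ℕ) (d : ℕ) :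
    X ^ d * generatingSeries R T = generatingSeries R ((· + d) '' T) := by
  ext k
  rw [coeff_X_pow_mul', coeff_generatingSeries]
  split_ifs with hdk
  · obtain ⟨m, rfl⟩ := Nat.exists_eq_add_of_le' hdk
    rw [Nat.add_sub_cancel, coeff_generatingSeries, Set.indicator_image (add_left_injective d)]
    rfl
  · refine (Set.indicator_of_notMem ?_ _).symm
    rintro ⟨m, -, hm⟩
    simp only [Finsupp.single_eq_same] at hm
    omega

theorem generatingSeries_compl [Ring R] (T : Set ℕ) :
    generatingSeries R Tᶜ = mk 1 - generatingSeries R T := by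
  ext k
  simp [Set.indicator_compl]

end generatingSeries

section

variable {n s : ℕ}

theorem exists_lt_mul_add_mul_eq_of_mem_closure_pair (hs : 0 < s) {k : ℕ}
    (hk : k ∈ AddSubmonoid.closure ({n, s} : Set ℕ)) :
    ∃ a < s, ∃ b, a * n + b * s = k := by
  obtain ⟨a, b, rfl⟩ := (AddSubmonoid.mem_closure_pair _ _ _).1 hk
  refine ⟨a % s, Nat.mod_lt _ hs, b + a / s * n, ?_⟩
  rw [smul_eq_mul, smul_eq_mul]
  nth_rw 3 [← Nat.mod_add_div a s]
  ring

theorem mul_ne_add_of_mem_closure_pair (h : n.Coprime s) {a m : ℕ} (ha : a < s)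
    (hm : m ∈ AddSubmonoid.closure ({n, s} : Set ℕ)) : a * n ≠ m + s := by
  obtain ⟨a', b, rfl⟩ := (AddSubmonoid.mem_closure_pair _ _ _).1 hm
  rw [smul_eq_mul, smul_eq_mul]
  intro heq
  have hlt : a' < a := by
    by_contra! hle
    nlinarith [Nat.mul_le_mul_right n hle]
  have hdvd : s ∣ a - a' := h.symm.dvd_of_dvd_mul_right ⟨b + 1, by rw [Nat.sub_mul]; lia⟩
  have := Nat.le_of_dvd (Nat.sub_pos_of_lt hlt) hdvd
  omega

theorem closure_pair_eq_image_mul_union_image_add (hs : 0 < s) :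
    (AddSubmonoid.closure ({n, s} : Set ℕ) : Set ℕ) =
      (· * n) '' Set.Iio s ∪ (· + s) '' AddSubmonoid.closure ({n, s} : Set ℕ) := by
  ext k
  constructor
  · intro hk
    obtain ⟨a, ha, b, rfl⟩ := exists_lt_mul_add_mul_eq_of_mem_closure_pair hs hk
    cases b with
    | zero => exact Or.inl ⟨a, ha, by simp⟩
    | succ b =>
      refine Or.inr ⟨a * n + b * s, (AddSubmonoid.mem_closure_pair _ _ _).2 ⟨a, b, rfl⟩, by ring⟩
  · rintro (⟨a, -, rfl⟩ | ⟨m, hm, rfl⟩)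
    · exact nsmul_mem (AddSubmonoid.subset_closure (by simp)) a
    · exact add_mem hm (AddSubmonoid.subset_closure (by simp))

theorem disjoint_image_mul_image_add_closure_pair (h : n.Coprime s) :
    Disjoint ((· * n) '' Set.Iio s) ((· + s) '' AddSubmonoid.closure ({n, s} : Set ℕ)) := by
  rw [Set.disjoint_left]
  rintro _ ⟨a, ha, rfl⟩ ⟨m, hm, hk⟩
  exact mul_ne_add_of_mem_closure_pair h ha hm hk.symm

theorem generatingSeries_closure_pair_mul {R : Type*} [CommRing R] (hn : 0 < n) (hs : 0 < s)
    (h : n.Coprime s) :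
    generatingSeries R (AddSubmonoid.closure ({n, s} : Set ℕ)) * ((1 - X ^ n) * (1 - X ^ s)) =
      1 - X ^ (n * s) := by
  set G := generatingSeries R (AddSubmonoid.closure ({n, s} : Set ℕ))
  have hApery : generatingSeries R ((· * n) '' Set.Iio s) = ∑ a ∈ Finset.range s, (X ^ n) ^ a := by
    classical
    rw [← Finset.coe_range, ← Finset.coe_image, generatingSeries_coe_finset,
      Finset.sum_image fun _ _ _ _ hab ↦ Nat.eq_of_mul_eq_mul_right hn hab]
    simp only [← pow_mul, mul_comm]
  have hdecomp : G = generatingSeries R ((· * n) '' Set.Iio s) + X ^ s * G := by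
    rw [X_pow_mul_generatingSeries, ← generatingSeries_union
      (disjoint_image_mul_image_add_closure_pair h), ← closure_pair_eq_image_mul_union_image_add hs]
  calc G * ((1 - X ^ n) * (1 - X ^ s)) = (G - X ^ s * G) * (1 - X ^ n) := by ring
    _ = (∑ a ∈ Finset.range s, (X ^ n) ^ a) * (1 - X ^ n) := by
      rw [← hApery, sub_eq_of_eq_add hdecomp]
    _ = 1 - X ^ (n * s) := by
      rw [pow_mul]
      linear_combination -geom_sum_mul (X ^ n : R⟦X⟧) s

end

/-- Generating function of the Weierstrass gaps of the numerical semigroup `⟨n,s⟩`: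
`∑_{w ∈ W} t^w = 1/(1-t) - (1-t^{ns})/((1-t^n)(1-t^s))` in `ℚ[[t]]`. -/
theorem gap_generating_function (n s : ℕ) (hn : 0 < n) (hs : 0 < s)
    (h : Nat.Coprime n s)
    (W : Set ℕ) (hW : W = {w : ℕ | 0 < w ∧ ¬ ∃ a b : ℕ, w = a * n + b * s})
    (hfin : W.Finite) :
    ∑ w ∈ hfin.toFinset, (PowerSeries.X : PowerSeries ℚ) ^ w =
      (1 - PowerSeries.X)⁻¹ -
        (1 - PowerSeries.X ^ (n * s)) *
          ((1 - PowerSeries.X ^ n) * (1 - PowerSeries.X ^ s))⁻¹ := by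
  have hW_compl : W = (AddSubmonoid.closure ({n, s} : Set ℕ) : Set ℕ)ᶜ := by
    ext w
    simp only [hW, Set.mem_ofPred_eq, Set.mem_compl_iff, SetLike.mem_coe,
      AddSubmonoid.mem_closure_pair, smul_eq_mul, eq_comm (b := w)]
    refine ⟨And.right, fun hw ↦ ⟨Nat.pos_of_ne_zero ?_, hw⟩⟩
    rintro rfl
    exact hw ⟨0, 0, by simp⟩
  have hgeom : (1 - X : ℚ⟦X⟧)⁻¹ = mk 1 :=
    (inv_eq_iff_mul_eq_one (by simp)).2 (mk_one_mul_one_sub_eq_one ℚ)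
  have hsemigroup : (1 - X ^ (n * s)) * ((1 - X ^ n) * (1 - X ^ s))⁻¹ =
      generatingSeries ℚ (AddSubmonoid.closure ({n, s} : Set ℕ)) :=
    ((eq_mul_inv_iff_mul_eq (by simp [hn.ne', hs.ne'])).2
      (generatingSeries_closure_pair_mul hn hs h)).symm
  rw [← generatingSeries_coe_finset, hfin.coe_toFinset, hW_compl, generatingSeries_compl, hgeom,
    hsemigroup]
end

section
/- Let λ₂, λ₅, λ₆, λ₈, λ₉, λ₁₂ be elements of a field K of characteristic 0, and let f(x,y) = y³ + x⁴ + λ₂yx² + λ₅yx + λ₆x² + λ₈y + λ₉x + λ₁₂. In the field of formal Laurent series K((ξ)), there exists a unique series y(ξ) of the form y(ξ) = ξ⁻⁴(−1 + ∑_{i≥1} μᵢξⁱ) with μᵢ ∈ K such that f(−ξ⁻³, y(ξ)) = 0; moreover μ₁ = 0, μ₂ = λ₂/3, μ₃ = μ₄ = 0, and μ₅ = −λ₅/3. -/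
/-- The defining polynomial of the (3,4)-curve. -/
def f34 {R : Type*} [CommRing R] (l2 l5 l6 l8 l9 l12 x y : R) : R :=
  y ^ 3 + x ^ 4 + l2 * y * x ^ 2 + l5 * y * x + l6 * x ^ 2 + l8 * y + l9 * x + l12

/-- The Laurent series `ξ⁻⁴ · (-1 + ∑_{i ≥ 1} μᵢ ξⁱ)`. -/
noncomputable def yser (K : Type*) [Field K] (μ : ℕ → K) : LaurentSeries K :=
  HahnSeries.single (-4 : ℤ) (1 : K) *
    HahnSeries.ofPowerSeries ℤ K (PowerSeries.mk fun i => if i = 0 then (-1 : K) else μ i)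

/-!
Substituting `x = -ξ⁻³`, `y = ξ⁻⁴ p` and multiplying by `ξ¹²` turns `f(x, y) = 0` into the cubic
`p³ + A p + (1 + B) = 0` over `K⟦ξ⟧`, where `A = λ₂ξ² - λ₅ξ⁵ + λ₈ξ⁸` and `B` vanish at `ξ = 0`.
Modulo `ξ` this is `p³ + 1`, of which `-1` is a simple root because `3 ≠ 0`, so Hensel's lemma
gives a root `p ≡ -1`. Two such roots differ by a factor of the unit `p² + pp' + p'² + A`, which
gives uniqueness and, since `-1 + (λ₂/3)ξ² - (λ₅/3)ξ⁵` is a root modulo `ξ⁶`, the first coefficients.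
-/

namespace PowerSeries

variable {R : Type*} [CommRing R]

theorem coeff_eq_of_X_pow_dvd_sub {P Q : R⟦X⟧} {n i : ℕ} (h : X ^ n ∣ P - Q)
    (hi : i < n) : coeff i P = coeff i Q := by
  rw [← sub_eq_zero, ← map_sub]
  exact X_pow_dvd_iff.mp h i hi

theorem existsUnique_mk_ite_of_existsUnique {c : R} {p : R⟦X⟧ → Prop}
    (h : ∃! P, constantCoeff P = c ∧ p P) :
    ∃! μ : ℕ → R, μ 0 = 0 ∧ p (mk fun i => if i = 0 then c else μ i) := by
  have coeff_mk_ite (μ : ℕ → R) (i : ℕ) (hi : i ≠ 0) :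
      coeff i (mk fun i => if i = 0 then c else μ i) = μ i := by simp [hi]
  have mk_ite_eq {μ : ℕ → R} {P : R⟦X⟧} (hP : constantCoeff P = c)
      (hμ : ∀ i ≠ 0, μ i = coeff i P) : (mk fun i => if i = 0 then c else μ i) = P := by
    ext (_ | i)
    · simp [hP]
    · simp [hμ]
  obtain ⟨P, ⟨hPc, hP⟩, huniq⟩ := h
  refine ⟨fun i => if i = 0 then 0 else coeff i P, ⟨rfl, ?_⟩, fun μ ⟨hμ0, hμ⟩ => ?_⟩
  · rwa [mk_ite_eq hPc fun i hi => if_neg hi]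
  · have hμP := huniq _ ⟨by simp, hμ⟩
    funext i
    rcases eq_or_ne i 0 with rfl | hi
    · exact hμ0
    · rw [if_neg hi, ← hμP, coeff_mk_ite μ i hi]

section Cubic

variable {A : R⟦X⟧}

theorem isUnit_sq_add_mul_add_sq_add (h3 : IsUnit (3 : R)) (hA : constantCoeff A = 0)
    {P Q : R⟦X⟧} (hP : constantCoeff P = -1) (hQ : constantCoeff Q = -1) :
    IsUnit (P ^ 2 + P * Q + Q ^ 2 + A) := by
  rw [isUnit_iff_constantCoeff]
  convert h3 using 1
  simp only [map_add, map_mul, map_pow, hP, hQ, hA]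
  norm_num

theorem X_pow_dvd_sub_of_dvd_cube_add_mul_sub (h3 : IsUnit (3 : R)) (hA : constantCoeff A = 0)
    {P Q : R⟦X⟧} (hP : constantCoeff P = -1) (hQ : constantCoeff Q = -1) {n : ℕ}
    (h : X ^ n ∣ (P ^ 3 + A * P) - (Q ^ 3 + A * Q)) : X ^ n ∣ P - Q := by
  rw [← (isUnit_sq_add_mul_add_sq_add h3 hA hP hQ).dvd_mul_right]
  convert h using 1
  ring

theorem eq_of_cube_add_mul_eq (h3 : IsUnit (3 : R)) (hA : constantCoeff A = 0)
    {P Q : R⟦X⟧} (hP : constantCoeff P = -1) (hQ : constantCoeff Q = -1)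
    (h : P ^ 3 + A * P = Q ^ 3 + A * Q) : P = Q := by
  have hu := isUnit_sq_add_mul_add_sq_add h3 hA hP hQ
  rw [← sub_eq_zero, ← hu.mul_left_eq_zero]
  linear_combination h

theorem exists_cube_add_mul_add_one_add_eq_zero (h3 : IsUnit (3 : R))
    (hA : constantCoeff A = 0) {B : R⟦X⟧} (hB : constantCoeff B = 0) :
    ∃ P : R⟦X⟧, constantCoeff P = -1 ∧ P ^ 3 + A * P + (1 + B) = 0 := by
  let f : Polynomial R⟦X⟧ := .X ^ 3 + .C A * .X + .C (1 + B)
  have hf : f.Monic := by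
    unfold f
    monicity!
  have hroot : f.eval (-1) ∈ Ideal.span {X} := by
    rw [Ideal.mem_span_singleton, X_dvd_iff]
    simp [f, hA, hB]
    norm_num
  have hsimple : IsUnit (Ideal.Quotient.mk (Ideal.span {X}) (f.derivative.eval (-1))) := by
    refine IsUnit.map _ (isUnit_iff_constantCoeff.mpr ?_)
    convert h3 using 1
    simp [f, hA, map_ofNat constantCoeff 2]
    norm_num
  obtain ⟨P, hPf, hP⟩ := HenselianRing.is_henselian f hf (-1) hroot hsimple
  refine ⟨P, ?_, ?_⟩
  · rw [Ideal.mem_span_singleton, X_dvd_iff, map_sub, sub_eq_zero] at hP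
    simpa using hP
  · simpa [f, Polynomial.IsRoot, add_assoc] using hPf

theorem existsUnique_cube_add_mul_add_one_add_eq_zero (h3 : IsUnit (3 : R))
    (hA : constantCoeff A = 0) {B : R⟦X⟧} (hB : constantCoeff B = 0) :
    ∃! P : R⟦X⟧, constantCoeff P = -1 ∧ P ^ 3 + A * P + (1 + B) = 0 := by
  obtain ⟨P, hP, hProot⟩ := exists_cube_add_mul_add_one_add_eq_zero h3 hA hB
  refine ⟨P, ⟨hP, hProot⟩, fun Q ⟨hQ, hQroot⟩ => eq_of_cube_add_mul_eq h3 hA hQ hP ?_⟩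
  linear_combination hQroot - hProot

end Cubic

theorem X_pow_six_dvd_cube_add_mul_add (a b c d e g : R) :
    let Q := -1 + C a * X ^ 2 - C b * X ^ 5
    X ^ 6 ∣ Q ^ 3 + (C (3 * a) * X ^ 2 - C (3 * b) * X ^ 5 + C c * X ^ 8) * Q +
      (1 + (C d * X ^ 6 - C e * X ^ 9 + C g * X ^ 12)) :=
  ⟨(C a - C b * X ^ 3) ^ 3 + C c * X ^ 2 * (C a * X ^ 2 - C b * X ^ 5 - 1) +
      (C d - C e * X ^ 3 + C g * X ^ 6), by simp only [map_mul, map_ofNat]; ring⟩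

end PowerSeries

open PowerSeries

theorem f34_neg_inv_mul_pow_twelve {F : Type*} [Field F] {ξ : F} (hξ : ξ ≠ 0)
    (l2 l5 l6 l8 l9 l12 q : F) :
    f34 l2 l5 l6 l8 l9 l12 (-(ξ ^ 3)⁻¹) ((ξ ^ 4)⁻¹ * q) * ξ ^ 12 =
      q ^ 3 + (l2 * ξ ^ 2 - l5 * ξ ^ 5 + l8 * ξ ^ 8) * q +
        (1 + (l6 * ξ ^ 6 - l9 * ξ ^ 9 + l12 * ξ ^ 12)) := by
  unfold f34
  field_simp
  ring

section

variable {K : Type*} [Field K]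

theorem LaurentSeries.single_neg_eq_inv_X_pow (n : ℕ) :
    HahnSeries.single (-(n : ℤ)) (1 : K) = (HahnSeries.ofPowerSeries ℤ K X ^ n)⁻¹ := by
  rw [← map_pow, HahnSeries.ofPowerSeries_X_pow]
  refine eq_inv_of_mul_eq_one_left ?_
  rw [HahnSeries.single_mul_single]
  simp

theorem f34_laurent_eq_zero_iff (l2 l5 l6 l8 l9 l12 : K) (p : K⟦X⟧) :
    f34 (algebraMap K (LaurentSeries K) l2) (algebraMap K (LaurentSeries K) l5)
        (algebraMap K (LaurentSeries K) l6) (algebraMap K (LaurentSeries K) l8)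
        (algebraMap K (LaurentSeries K) l9) (algebraMap K (LaurentSeries K) l12)
        (-(HahnSeries.single (-3 : ℤ) (1 : K)))
        (HahnSeries.single (-4 : ℤ) (1 : K) * HahnSeries.ofPowerSeries ℤ K p) = 0 ↔
      p ^ 3 + (C l2 * X ^ 2 - C l5 * X ^ 5 + C l8 * X ^ 8) * p +
        (1 + (C l6 * X ^ 6 - C l9 * X ^ 9 + C l12 * X ^ 12)) = 0 := by
  have hξ : HahnSeries.ofPowerSeries ℤ K X ≠ 0 := by simp
  rw [← (HahnSeries.ofPowerSeries_injective (Γ := ℤ) (R := K)).eq_iff, map_zero,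
    ← mul_eq_zero_iff_right (pow_ne_zero 12 hξ)]
  have h3 := LaurentSeries.single_neg_eq_inv_X_pow (K := K) 3
  have h4 := LaurentSeries.single_neg_eq_inv_X_pow (K := K) 4
  push_cast at h3 h4
  rw [h3, h4, f34_neg_inv_mul_pow_twelve hξ]
  simp [HahnSeries.algebraMap_apply']

theorem coeff_le_five_of_cube_add_mul_add_eq_zero (h3 : (3 : K) ≠ 0) {l2 l5 l6 l8 l9 l12 : K}
    {P : K⟦X⟧} (hP : constantCoeff P = -1)
    (h : P ^ 3 + (C l2 * X ^ 2 - C l5 * X ^ 5 + C l8 * X ^ 8) * P +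
      (1 + (C l6 * X ^ 6 - C l9 * X ^ 9 + C l12 * X ^ 12)) = 0) :
    coeff 1 P = 0 ∧ coeff 2 P = l2 / 3 ∧ coeff 3 P = 0 ∧ coeff 4 P = 0 ∧ coeff 5 P = -l5 / 3 := by
  set Q : K⟦X⟧ := -1 + C (l2 / 3) * X ^ 2 - C (l5 / 3) * X ^ 5
  have hQ : constantCoeff Q = -1 := by simp [Q]
  have hQroot := X_pow_six_dvd_cube_add_mul_add (l2 / 3) (l5 / 3) l8 l6 l9 l12
  rw [mul_div_cancel₀ _ h3, mul_div_cancel₀ _ h3] at hQroot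
  have hA : constantCoeff (C l2 * X ^ 2 - C l5 * X ^ 5 + C l8 * X ^ 8) = 0 := by simp
  have hPQ : X ^ 6 ∣ P - Q := by
    refine X_pow_dvd_sub_of_dvd_cube_add_mul_sub h3.isUnit hA hP hQ ?_
    rw [← dvd_neg]
    convert hQroot using 1
    linear_combination -h
  have hcoeff (i : ℕ) (hi : i < 6) := coeff_eq_of_X_pow_dvd_sub hPQ hi
  refine ⟨?_, ?_, ?_, ?_, ?_⟩ <;> rw [hcoeff _ (by norm_num)]
  all_goals simp [Q, coeff_X_pow, neg_div]

end

/-- Local parameterization of the (3,4)-curve at infinity: there is a unique Laurent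
series `y(ξ) = ξ⁻⁴(-1 + ∑_{i≥1} μᵢ ξⁱ)` with `f(-ξ⁻³, y(ξ)) = 0`, and its first
coefficients are `μ₁ = 0`, `μ₂ = λ₂/3`, `μ₃ = μ₄ = 0`, `μ₅ = -λ₅/3`. -/
theorem param_34 (K : Type*) [Field K] [CharZero K] (l2 l5 l6 l8 l9 l12 : K) :
    (∃! μ : ℕ → K, μ 0 = 0 ∧
        f34 ((algebraMap K (LaurentSeries K)) l2) ((algebraMap K (LaurentSeries K)) l5)
          ((algebraMap K (LaurentSeries K)) l6) ((algebraMap K (LaurentSeries K)) l8)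
          ((algebraMap K (LaurentSeries K)) l9) ((algebraMap K (LaurentSeries K)) l12)
          (-(HahnSeries.single (-3 : ℤ) (1 : K))) (yser K μ) = 0) ∧
      ∀ μ : ℕ → K, μ 0 = 0 →
        f34 ((algebraMap K (LaurentSeries K)) l2) ((algebraMap K (LaurentSeries K)) l5)
          ((algebraMap K (LaurentSeries K)) l6) ((algebraMap K (LaurentSeries K)) l8)
          ((algebraMap K (LaurentSeries K)) l9) ((algebraMap K (LaurentSeries K)) l12)
          (-(HahnSeries.single (-3 : ℤ) (1 : K))) (yser K μ) = 0 →
        μ 1 = 0 ∧ μ 2 = l2 / 3 ∧ μ 3 = 0 ∧ μ 4 = 0 ∧ μ 5 = -l5 / 3 := by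
  have h3 : (3 : K) ≠ 0 := three_ne_zero
  simp only [yser, f34_laurent_eq_zero_iff]
  refine ⟨existsUnique_mk_ite_of_existsUnique
    (existsUnique_cube_add_mul_add_one_add_eq_zero h3.isUnit (by simp) (by simp)),
    fun μ _ hμ => ?_⟩
  simpa using coeff_le_five_of_cube_add_mul_add_eq_zero h3 (by simp) hμ
end
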